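/- Let A, B ∈ ℂ^{n×n}, let Q ∈ ℂ^{n×s} with Q*Q = I_s, and suppose AQ = U1 Σ1 V11* + U2 Σ2 V12* and BQ = U1 Σ1 V21* + U2 Σ2 V22*, where U1, U2 ∈ ℂ^{n×s} satisfy U1*U1 = I_s, U2*U2 = I_s, U1*U2 = 0, Σ1, Σ2 ∈ ℝ^{s×s} are real diagonal, and V11, V12, V21, V22 ∈ ℂ^{s×s} with V21 invertible. Define Λ = (V21*)^{−1} V11*, Δ_A = −U2 Σ2 V12* Q*, and Δ_B = −U2 Σ2 V22* Q*. Then (A + Δ_A) Q = (B + Δ_B) Q Λ. -/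

import Mathlib

open Matrix

theorem Matrix.add_neg_mul_mul_eq_of_mul_eq_add {m n k R : Type*} [Fintype n] [Fintype k]
    [DecidableEq k] [Ring R] {A : Matrix m n R} {Q : Matrix n k R} {P : Matrix k n R}
    {Y Z : Matrix m k R} (hPQ : P * Q = 1) (hAQ : A * Q = Y + Z) :
    (A + -(Z * P)) * Q = Y := by
  rw [Matrix.add_mul, hAQ, Matrix.neg_mul, Matrix.mul_assoc, hPQ, Matrix.mul_one,
    add_neg_cancel_right]

theorem backward_error_identity {n s : ℕ}
    (A B : Matrix (Fin n) (Fin n) ℂ) (Q U₁ U₂ : Matrix (Fin n) (Fin s) ℂ)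
    (σ₁ σ₂ : Fin s → ℝ) (V₁₁ V₁₂ V₂₁ V₂₂ : Matrix (Fin s) (Fin s) ℂ)
    (hQ : Qᴴ * Q = 1)
    (hAQ : A * Q = U₁ * Matrix.diagonal (fun i => (σ₁ i : ℂ)) * V₁₁ᴴ +
      U₂ * Matrix.diagonal (fun i => (σ₂ i : ℂ)) * V₁₂ᴴ)
    (hBQ : B * Q = U₁ * Matrix.diagonal (fun i => (σ₁ i : ℂ)) * V₂₁ᴴ +
      U₂ * Matrix.diagonal (fun i => (σ₂ i : ℂ)) * V₂₂ᴴ)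
    (hV₂₁ : IsUnit V₂₁) :
    (A + -(U₂ * Matrix.diagonal (fun i => (σ₂ i : ℂ)) * V₁₂ᴴ * Qᴴ)) * Q =
      (B + -(U₂ * Matrix.diagonal (fun i => (σ₂ i : ℂ)) * V₂₂ᴴ * Qᴴ)) * Q *
        ((V₂₁ᴴ)⁻¹ * V₁₁ᴴ) := by
  have hdet : IsUnit V₂₁ᴴ.det :=
    (isUnit_iff_isUnit_det _).mp ((isUnit_conjTranspose V₂₁).mpr hV₂₁)
  rw [add_neg_mul_mul_eq_of_mul_eq_add hQ hAQ, add_neg_mul_mul_eq_of_mul_eq_add hQ hBQ,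
    Matrix.mul_assoc _ V₂₁ᴴ, mul_nonsing_inv_cancel_left _ _ hdet]
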